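/- arXiv:1307.0050 — 3 statements merged into one kernel-verified Lean document; each statement's English description precedes it below -/
import Mathlib

section
/- Let F ⊆ [a,b] × [0,ℓ] be a closed subset of a rectangle such that: (i) for every t ∈ [a,b], the vertical slice F ∩ ({t} × [0,ℓ]) is a nonempty interval; (ii) F meets [a,b] × {0} and F meets [a,b] × {ℓ}. Then F is connected, and consequently F meets every horizontal slice [a,b] × {s} for s ∈ [0,ℓ]. -/
theorem stmt_13 (a b ℓ : ℝ) (hab : a ≤ b) (hℓ : 0 ≤ ℓ) (F : Set (ℝ × ℝ))
    (hFc : IsClosed F) (hFsub : F ⊆ Set.Icc a b ×ˢ Set.Icc 0 ℓ)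
    (hne : ∀ t ∈ Set.Icc a b, ∃ y, (t, y) ∈ F)
    (hint : ∀ t y₁ y₂ y, (t, y₁) ∈ F → (t, y₂) ∈ F → y₁ ≤ y → y ≤ y₂ → (t, y) ∈ F)
    (hbot : ∃ t, (t, (0 : ℝ)) ∈ F) (htop : ∃ t, (t, ℓ) ∈ F) :
    IsConnected F ∧ ∀ s ∈ Set.Icc (0 : ℝ) ℓ, ∃ t, (t, s) ∈ F := by
  classical
  obtain ⟨t₀, ht₀⟩ := hbot
  obtain ⟨t₁, ht₁⟩ := htop
  -- slices are ordConnected hence preconnected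
  have hslice : ∀ t : ℝ, IsPreconnected ((fun y => (t, y)) '' {y | (t, y) ∈ F}) := by
    intro t
    have hoc : Set.OrdConnected {y | (t, y) ∈ F} :=
      ⟨fun y₁ h1 y₂ h2 y hy => hint t y₁ y₂ y h1 h2 hy.1 hy.2⟩
    exact (isPreconnected_iff_ordConnected.mpr hoc).image _
      (Continuous.continuousOn (by continuity))
  have hFcomp : IsCompact F :=
    ((isCompact_Icc.prod isCompact_Icc).of_isClosed_subset hFc hFsub)
  have hpre : IsPreconnected F := by
    intro u v hu hv hsub ⟨x, hxF, hxu⟩ ⟨y, hyF, hyv⟩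
    by_contra hempty
    have hUV : F ∩ (u ∩ v) = ∅ := by
      rw [Set.not_nonempty_iff_eq_empty] at hempty; exact hempty
    -- F ∩ u = F \ v is closed (hence compact)
    have hFu : F ∩ u = F \ v := by
      apply Set.Subset.antisymm
      · rintro z ⟨hzF, hzu⟩
        refine ⟨hzF, fun hzv => ?_⟩
        have : z ∈ F ∩ (u ∩ v) := ⟨hzF, hzu, hzv⟩
        simp [hUV] at this
      · rintro z ⟨hzF, hzv⟩
        rcases hsub hzF with h | h
        · exact ⟨hzF, h⟩
        · exact absurd h hzv
    have hFv : F ∩ v = F \ u := by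
      apply Set.Subset.antisymm
      · rintro z ⟨hzF, hzv⟩
        refine ⟨hzF, fun hzu => ?_⟩
        have : z ∈ F ∩ (u ∩ v) := ⟨hzF, hzu, hzv⟩
        simp [hUV] at this
      · rintro z ⟨hzF, hzu⟩
        rcases hsub hzF with h | h
        · exact absurd h hzu
        · exact ⟨hzF, h⟩
    have hcu : IsCompact (F ∩ u) := by
      rw [hFu]; exact hFcomp.of_isClosed_subset (hFc.sdiff hv) Set.diff_subset
    have hcv : IsCompact (F ∩ v) := by
      rw [hFv]; exact hFcomp.of_isClosed_subset (hFc.sdiff hu) Set.diff_subset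
    set Cu := Prod.fst '' (F ∩ u) with hCu
    set Cv := Prod.fst '' (F ∩ v) with hCv
    have hCuc : IsClosed Cu := (hcu.image continuous_fst).isClosed
    have hCvc : IsClosed Cv := (hcv.image continuous_fst).isClosed
    have hcover : Set.Icc a b ⊆ Cu ∪ Cv := by
      intro t ht
      obtain ⟨w, hw⟩ := hne t ht
      rcases hsub hw with h | h
      · exact Or.inl ⟨(t, w), ⟨hw, h⟩, rfl⟩
      · exact Or.inr ⟨(t, w), ⟨hw, h⟩, rfl⟩
    have hIcc : IsPreconnected (Set.Icc a b) := isPreconnected_Icc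
    have := (isPreconnected_closed_iff.mp hIcc) Cu Cv hCuc hCvc hcover
      ⟨x.1, (hFsub hxF).1, ⟨x, ⟨hxF, hxu⟩, rfl⟩⟩ ⟨y.1, (hFsub hyF).1, ⟨y, ⟨hyF, hyv⟩, rfl⟩⟩
    obtain ⟨t, htI, ⟨zu, hzu, hzu1⟩, ⟨zv, hzv, hzv1⟩⟩ := this
    -- slice at t meets both u and v
    have hzu' : (t, zu.2) ∈ F ∩ u := by rwa [← hzu1, Prod.mk.eta]
    have hzv' : (t, zv.2) ∈ F ∩ v := by rwa [← hzv1, Prod.mk.eta]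
    have hsl := hslice t
    have hS : (fun y => (t, y)) '' {y | (t, y) ∈ F} ⊆ u ∪ v := by
      rintro z ⟨w, hw, rfl⟩; exact hsub hw
    obtain ⟨p, hp⟩ := hsl u v hu hv hS
      ⟨(t, zu.2), ⟨zu.2, hzu'.1, rfl⟩, hzu'.2⟩
      ⟨(t, zv.2), ⟨zv.2, hzv'.1, rfl⟩, hzv'.2⟩
    obtain ⟨⟨w, hw, rfl⟩, hpu, hpv⟩ := hp
    have : (t, w) ∈ F ∩ (u ∩ v) := ⟨hw, hpu, hpv⟩
    simp [hUV] at this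
  have hconn : IsConnected F := ⟨⟨(t₀, 0), ht₀⟩, hpre⟩
  refine ⟨hconn, fun s hs => ?_⟩
  have himg : IsPreconnected (Prod.snd '' F) :=
    hpre.image _ continuous_snd.continuousOn
  have hoc := isPreconnected_iff_ordConnected.mp himg
  have h0 : (0 : ℝ) ∈ Prod.snd '' F := ⟨(t₀, 0), ht₀, rfl⟩
  have hℓ' : ℓ ∈ Prod.snd '' F := ⟨(t₁, ℓ), ht₁, rfl⟩
  obtain ⟨z, hzF, hz2⟩ := hoc.out h0 hℓ' hs
  exact ⟨z.1, by rwa [← hz2, Prod.mk.eta]⟩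
end

section
/- Let γ : [a,b] → H be a continuous curve in the Heisenberg group with Koranyi metric d (η ∈ (0,16] fixed), let τ = γ|_{[a,b]} with L_τ the horizontal segment starting at γ(a) in the direction π̃(γ(a)⁻¹γ(b)), and let β·D := sup_{t ∈ [a,b]} d(γ(t), L_τ) (where D = diam of the image of γ). Then sup_{x ∈ L_τ} d(x, image(γ)) ≤ β·D. -/
/-- Heisenberg group multiplication on ℝ³. -/
noncomputable def Hmul (g h : ℝ × ℝ × ℝ) : ℝ × ℝ × ℝ :=
  (g.1 + h.1, g.2.1 + h.2.1, g.2.2 + h.2.2 + (g.1 * h.2.1 - h.1 * g.2.1) / 2)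

/-- Heisenberg group inverse. -/
noncomputable def Hinv (g : ℝ × ℝ × ℝ) : ℝ × ℝ × ℝ := (-g.1, -g.2.1, -g.2.2)

/-- The Koranyi norm with parameter η. -/
noncomputable def KN (η : ℝ) (g : ℝ × ℝ × ℝ) : ℝ :=
  ((g.1 ^ 2 + g.2.1 ^ 2) ^ 2 + η * g.2.2 ^ 2) ^ ((1 : ℝ) / 4)

/-- The Koranyi metric with parameter η. -/
noncomputable def dK (η : ℝ) (g h : ℝ × ℝ × ℝ) : ℝ := KN η (Hmul (Hinv g) h)

/-- Heisenberg dilation. -/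
noncomputable def Hdil (l : ℝ) (g : ℝ × ℝ × ℝ) : ℝ × ℝ × ℝ := (l * g.1, l * g.2.1, l ^ 2 * g.2.2)

/-- Projection to the horizontal element below. -/
noncomputable def Hpi (g : ℝ × ℝ × ℝ) : ℝ × ℝ × ℝ := (g.1, g.2.1, 0)

/-- The horizontal interpolation segment from `a` towards `b`. -/
noncomputable def Hseg (a b : ℝ × ℝ × ℝ) : Set (ℝ × ℝ × ℝ) :=
  {p | ∃ s ∈ Set.Icc (0 : ℝ) 1, p = Hmul a (Hdil s (Hpi (Hmul (Hinv a) b)))}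

/-! ### Auxiliary definitions and lemmas -/

/-- The fourth power of the Koranyi distance (the "quartic gauge" of the displacement). -/
noncomputable def Qd (η : ℝ) (g h : ℝ × ℝ × ℝ) : ℝ :=
  (((Hmul (Hinv g) h).1 ^ 2 + (Hmul (Hinv g) h).2.1 ^ 2) ^ 2
    + η * (Hmul (Hinv g) h).2.2 ^ 2)

/-- Parametrization of the horizontal segment. -/
noncomputable def segp (A B : ℝ × ℝ × ℝ) (s : ℝ) : ℝ × ℝ × ℝ :=
  Hmul A (Hdil s (Hpi (Hmul (Hinv A) B)))

lemma Qd_nonneg {η : ℝ} (hη : 0 ≤ η) (g h : ℝ × ℝ × ℝ) : 0 ≤ Qd η g h :=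
  add_nonneg (by positivity) (mul_nonneg hη (sq_nonneg _))

lemma dK_eq (η : ℝ) (g h : ℝ × ℝ × ℝ) : dK η g h = (Qd η g h) ^ ((1:ℝ)/4) := rfl

lemma dK_nonneg {η : ℝ} (hη : 0 ≤ η) (g h : ℝ × ℝ × ℝ) : 0 ≤ dK η g h := by
  rw [dK_eq]; exact Real.rpow_nonneg (Qd_nonneg hη g h) _

lemma dK_le_iff {η C : ℝ} (hη : 0 ≤ η) (hC : 0 ≤ C) (g h : ℝ × ℝ × ℝ) :
    dK η g h ≤ C ↔ Qd η g h ≤ C ^ 4 := by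
  rw [dK_eq, show ((1:ℝ)/4) = ((4:ℝ))⁻¹ by norm_num,
    Real.rpow_inv_le_iff_of_pos (Qd_nonneg hη g h) hC (by norm_num)]
  rw [show ((4:ℝ):ℝ) = ((4:ℕ):ℝ) by norm_num, Real.rpow_natCast]

lemma dK_symm (η : ℝ) (g h : ℝ × ℝ × ℝ) : dK η g h = dK η h g := by
  unfold dK KN Hmul Hinv
  congr 2 <;> ring

lemma dK_self (η : ℝ) (g : ℝ × ℝ × ℝ) : dK η g g = 0 := by
  unfold dK KN Hmul Hinv
  rw [show ((-g.1 + g.1, -g.2.1 + g.2.1,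
      -g.2.2 + g.2.2 + (-g.1 * g.2.1 - g.1 * -g.2.1) / 2) : ℝ×ℝ×ℝ).2.2 = 0 by norm_num]
  norm_num [Real.zero_rpow]

lemma segp_zero (A B : ℝ × ℝ × ℝ) : segp A B 0 = A := by
  unfold segp Hmul Hinv Hdil Hpi
  norm_num

lemma sq_combo (x y l : ℝ) (hl0 : 0 ≤ l) (hl1 : l ≤ 1) :
    (l*x+(1-l)*y)^2 ≤ l*x^2+(1-l)*y^2 := by
  nlinarith [mul_nonneg hl0 (sub_nonneg.2 hl1), sq_nonneg (x-y)]

/-- Convexity of the quartic gauge along affine lines (algebraic core). -/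
lemma key_alg (η : ℝ) (hη : 0 ≤ η) (p1 p2 p3 q1 q2 q3 l : ℝ)
    (hl0 : 0 ≤ l) (hl1 : l ≤ 1) (K : ℝ)
    (h1 : (p1^2+p2^2)^2 + η*p3^2 ≤ K) (h2 : (q1^2+q2^2)^2 + η*q3^2 ≤ K) :
    ((l*p1+(1-l)*q1)^2+(l*p2+(1-l)*q2)^2)^2 + η*(l*p3+(1-l)*q3)^2 ≤ K := by
  have hm0 : 0 ≤ 1 - l := by linarith
  have h3 : (l*p1+(1-l)*q1)^2+(l*p2+(1-l)*q2)^2 ≤ l*(p1^2+p2^2)+(1-l)*(q1^2+q2^2) := by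
    have := sq_combo p1 q1 l hl0 hl1
    have := sq_combo p2 q2 l hl0 hl1
    linarith
  have h4 := sq_combo (p1^2+p2^2) (q1^2+q2^2) l hl0 hl1
  have h5 : ((l*p1+(1-l)*q1)^2+(l*p2+(1-l)*q2)^2)^2
      ≤ (l*(p1^2+p2^2)+(1-l)*(q1^2+q2^2))^2 := by
    apply pow_le_pow_left₀ (by positivity) h3
  have h6 : η*(l*p3+(1-l)*q3)^2 ≤ η*(l*p3^2+(1-l)*q3^2) :=
    mul_le_mul_of_nonneg_left (sq_combo p3 q3 l hl0 hl1) hη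
  have t1 := mul_le_mul_of_nonneg_left h1 hl0
  have t2 := mul_le_mul_of_nonneg_left h2 hm0
  calc ((l*p1+(1-l)*q1)^2+(l*p2+(1-l)*q2)^2)^2 + η*(l*p3+(1-l)*q3)^2
      ≤ (l*(p1^2+p2^2)+(1-l)*(q1^2+q2^2))^2 + η*(l*p3^2+(1-l)*q3^2) := add_le_add h5 h6
    _ ≤ (l*(p1^2+p2^2)^2+(1-l)*(q1^2+q2^2)^2) + η*(l*p3^2+(1-l)*q3^2) := by linarith
    _ = l*((p1^2+p2^2)^2+η*p3^2) + (1-l)*((q1^2+q2^2)^2+η*q3^2) := by ring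
    _ ≤ l*K + (1-l)*K := add_le_add t1 t2
    _ = K := by ring

/-- Sublevel sets of the Koranyi distance from a fixed point, intersected with the
horizontal segment, are convex (in the parameter). -/
lemma seg_convex {η C : ℝ} (hη : 0 ≤ η) (hC : 0 ≤ C) (A B g : ℝ × ℝ × ℝ) {s₁ s s₂ : ℝ}
    (h1 : s₁ ≤ s) (h2 : s ≤ s₂)
    (H1 : dK η g (segp A B s₁) ≤ C) (H2 : dK η g (segp A B s₂) ≤ C) :
    dK η g (segp A B s) ≤ C := by
  rcases eq_or_lt_of_le (h1.trans h2) with heq | hlt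
  · have hss : s = s₁ := le_antisymm (heq ▸ h2) h1
    rw [hss]; exact H1
  · have hpos : 0 < s₂ - s₁ := by linarith
    obtain ⟨l, hl0, hl1, hs⟩ : ∃ l, 0 ≤ l ∧ l ≤ 1 ∧ s = l*s₁+(1-l)*s₂ := by
      refine ⟨(s₂-s)/(s₂-s₁), div_nonneg (by linarith) (by linarith),
        (div_le_one hpos).mpr (by linarith), ?_⟩
      field_simp
      ring
    rw [dK_le_iff hη hC] at H1 H2 ⊢
    rw [hs]
    have hid : Qd η g (segp A B (l*s₁+(1-l)*s₂)) =
        ((l*(Hmul (Hinv g) (segp A B s₁)).1 + (1-l)*(Hmul (Hinv g) (segp A B s₂)).1)^2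
          + (l*(Hmul (Hinv g) (segp A B s₁)).2.1
              + (1-l)*(Hmul (Hinv g) (segp A B s₂)).2.1)^2)^2
        + η*(l*(Hmul (Hinv g) (segp A B s₁)).2.2
              + (1-l)*(Hmul (Hinv g) (segp A B s₂)).2.2)^2 := by
      simp only [Qd, segp, Hmul, Hinv, Hdil, Hpi]
      ring
    rw [hid]
    exact key_alg η hη _ _ _ _ _ _ l hl0 hl1 (C^4) H1 H2

/-- The endpoint `s = 1` of the segment is the closest point of the segment to `B`. -/
lemma seg_one_min {η : ℝ} (hη : 0 ≤ η) (A B : ℝ × ℝ × ℝ) (s : ℝ) :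
    dK η B (segp A B 1) ≤ dK η B (segp A B s) := by
  rw [dK_eq, dK_eq]
  apply Real.rpow_le_rpow (Qd_nonneg hη _ _) ?_ (by norm_num)
  have hid : Qd η B (segp A B s) = Qd η B (segp A B 1)
      + (((s-1)*(B.1-A.1))^2 + ((s-1)*(B.2.1-A.2.1))^2)^2 := by
    simp only [Qd, segp, Hmul, Hinv, Hdil, Hpi]
    ring
  have hnn : 0 ≤ (((s-1)*(B.1-A.1))^2 + ((s-1)*(B.2.1-A.2.1))^2)^2 := by positivity
  linarith [hid]

lemma KN_cont (η : ℝ) : Continuous (KN η) := by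
  have h4 : Continuous fun x : ℝ => x ^ ((1:ℝ)/4) := by
    rw [continuous_iff_continuousAt]
    intro x
    exact Real.continuousAt_rpow_const x _ (Or.inr (by norm_num))
  have hP : Continuous fun g : ℝ×ℝ×ℝ => (g.1 ^ 2 + g.2.1 ^ 2) ^ 2 + η * g.2.2 ^ 2 := by
    fun_prop
  exact h4.comp hP

lemma cont_pair (η : ℝ) (γ : ℝ → ℝ×ℝ×ℝ) (A B : ℝ×ℝ×ℝ) {S : Set ℝ}
    (hγ : ContinuousOn γ S) :
    ContinuousOn (fun p : ℝ×ℝ => dK η (γ p.1) (segp A B p.2)) {p : ℝ×ℝ | p.1 ∈ S} := by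
  have hγ1 : ContinuousOn (fun p : ℝ×ℝ => γ p.1) {p : ℝ×ℝ | p.1 ∈ S} :=
    hγ.comp continuousOn_fst (fun p hp => hp)
  have hseg : Continuous (fun p : ℝ×ℝ => segp A B p.2) := by
    simp only [segp, Hmul, Hinv, Hdil, Hpi]
    fun_prop
  have hF : ContinuousOn
      (fun p : ℝ×ℝ => Hmul (Hinv (γ p.1)) (segp A B p.2)) {p : ℝ×ℝ | p.1 ∈ S} := by
    simp only [Hmul, Hinv]
    apply ContinuousOn.prodMk
    · exact (hγ1.fst.neg).add (hseg.fst.continuousOn)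
    · apply ContinuousOn.prodMk
      · exact (hγ1.snd.fst.neg).add (hseg.snd.fst.continuousOn)
      · apply ContinuousOn.add
        · exact (hγ1.snd.snd.neg).add (hseg.snd.snd.continuousOn)
        · apply ContinuousOn.div_const
          apply ContinuousOn.sub
          · exact (hγ1.fst.neg).mul (hseg.snd.fst.continuousOn)
          · exact (hseg.fst.continuousOn).mul (hγ1.snd.fst.neg)
  exact (KN_cont η).comp_continuousOn hF

theorem stmt_14 (η : ℝ) (hη : η ∈ Set.Ioc (0 : ℝ) 16) (γ : ℝ → ℝ × ℝ × ℝ)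
    (a b : ℝ) (hab : a ≤ b) (hγ : ContinuousOn γ (Set.Icc a b)) (C : ℝ)
    (hC : ∀ t ∈ Set.Icc a b,
      sInf {r : ℝ | ∃ w ∈ Hseg (γ a) (γ b), r = dK η (γ t) w} ≤ C) :
    ∀ z ∈ Hseg (γ a) (γ b),
      sInf {r : ℝ | ∃ t ∈ Set.Icc a b, r = dK η z (γ t)} ≤ C := by
  obtain ⟨hη0, hη16⟩ := hη
  have hη0' : (0:ℝ) ≤ η := le_of_lt hη0
  have haa : a ∈ Set.Icc a b := ⟨le_refl a, hab⟩
  have hbb : b ∈ Set.Icc a b := ⟨hab, le_refl b⟩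
  have hmem0 : (γ a : ℝ×ℝ×ℝ) ∈ Hseg (γ a) (γ b) :=
    ⟨0, ⟨le_refl 0, zero_le_one⟩, (segp_zero (γ a) (γ b)).symm⟩
  -- C is nonnegative
  have hCnn : 0 ≤ C := by
    refine le_trans ?_ (hC a haa)
    apply le_csInf
    · exact ⟨dK η (γ a) (γ a), γ a, hmem0, rfl⟩
    · rintro r ⟨w, hw, rfl⟩
      exact dK_nonneg hη0' _ _
  -- nonemptiness of the slices: every point of the curve is within C of the segment
  have hslice : ∀ t ∈ Set.Icc a b,
      ∃ s ∈ Set.Icc (0:ℝ) 1, dK η (γ t) (segp (γ a) (γ b) s) ≤ C := by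
    intro t ht
    have hcont : ContinuousOn (fun s => dK η (γ t) (segp (γ a) (γ b) s)) (Set.Icc 0 1) := by
      apply Continuous.continuousOn
      apply (KN_cont η).comp
      simp only [Hmul, Hinv, segp, Hdil, Hpi]
      fun_prop
    obtain ⟨s₀, hs₀, hmin⟩ :=
      isCompact_Icc.exists_isMinOn ⟨0, ⟨le_refl 0, zero_le_one⟩⟩ hcont
    refine ⟨s₀, hs₀, ?_⟩
    refine le_trans ?_ (hC t ht)
    refine le_csInf ⟨dK η (γ t) (γ a), γ a, hmem0, rfl⟩ ?_
    rintro r ⟨w, ⟨s, hs, rfl⟩, rfl⟩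
    exact isMinOn_iff.mp hmin s hs
  -- the endpoint of the segment is within C of γ b
  have hend : dK η (γ b) (segp (γ a) (γ b) 1) ≤ C := by
    obtain ⟨s₀, _, h⟩ := hslice b hbb
    exact le_trans (seg_one_min hη0' (γ a) (γ b) s₀) h
  -- main claim: every point of the segment is within C of the curve
  have main : ∀ s' ∈ Set.Icc (0:ℝ) 1,
      ∃ t ∈ Set.Icc a b, dK η (γ t) (segp (γ a) (γ b) s') ≤ C := by
    by_contra hcon
    push_neg at hcon
    obtain ⟨s', hs', hfar⟩ := hcon
    set f : ℝ×ℝ → ℝ := fun p => dK η (γ p.1) (segp (γ a) (γ b) p.2) with hf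
    have hfc : ContinuousOn f {p : ℝ×ℝ | p.1 ∈ Set.Icc a b} :=
      cont_pair η γ (γ a) (γ b) hγ
    have hclosed : IsClosed ({p : ℝ×ℝ | p.1 ∈ Set.Icc a b} ∩ f ⁻¹' (Set.Iic C)) :=
      hfc.preimage_isClosed_of_isClosed (isClosed_Icc.preimage continuous_fst) isClosed_Iic
    have mk : ∀ c d : ℝ, IsCompact ((Set.Icc a b ×ˢ Set.Icc c d)
        ∩ ({p : ℝ×ℝ | p.1 ∈ Set.Icc a b} ∩ f ⁻¹' (Set.Iic C))) := fun c d =>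
      (isCompact_Icc.prod isCompact_Icc).inter_right hclosed
    set u := Prod.fst '' ((Set.Icc a b ×ˢ Set.Icc 0 s')
        ∩ ({p : ℝ×ℝ | p.1 ∈ Set.Icc a b} ∩ f ⁻¹' (Set.Iic C))) with hu_def
    set v := Prod.fst '' ((Set.Icc a b ×ˢ Set.Icc s' 1)
        ∩ ({p : ℝ×ℝ | p.1 ∈ Set.Icc a b} ∩ f ⁻¹' (Set.Iic C))) with hv_def
    have hu : IsClosed u := ((mk 0 s').image continuous_fst).isClosed
    have hv : IsClosed v := ((mk s' 1).image continuous_fst).isClosed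
    have hcover : Set.Icc a b ⊆ u ∪ v := by
      intro t ht
      obtain ⟨s₀, hs₀, hle⟩ := hslice t ht
      rcases le_total s₀ s' with h | h
      · exact Or.inl ⟨(t, s₀), ⟨⟨ht, ⟨hs₀.1, h⟩⟩, ⟨ht, hle⟩⟩, rfl⟩
      · exact Or.inr ⟨(t, s₀), ⟨⟨ht, ⟨h, hs₀.2⟩⟩, ⟨ht, hle⟩⟩, rfl⟩
    have hau : a ∈ u := by
      refine ⟨(a, 0), ⟨⟨haa, ⟨le_refl 0, hs'.1⟩⟩, ⟨haa, ?_⟩⟩, rfl⟩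
      show dK η (γ a) (segp (γ a) (γ b) 0) ≤ C
      rw [segp_zero, dK_self]
      exact hCnn
    have hbv : b ∈ v := by
      refine ⟨(b, 1), ⟨⟨hbb, ⟨hs'.2, le_refl 1⟩⟩, ⟨hbb, ?_⟩⟩, rfl⟩
      exact hend
    obtain ⟨t, ht, htu, htv⟩ :=
      isPreconnected_closed_iff.mp isPreconnected_Icc u v hu hv hcover
        ⟨a, haa, hau⟩ ⟨b, hbb, hbv⟩
    obtain ⟨p, ⟨⟨_, hp2⟩, ⟨_, hpC⟩⟩, hpt⟩ := htu
    obtain ⟨q, ⟨⟨_, hq2⟩, ⟨_, hqC⟩⟩, hqt⟩ := htv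
    have hpC' : dK η (γ t) (segp (γ a) (γ b) p.2) ≤ C := by rwa [← hpt]
    have hqC' : dK η (γ t) (segp (γ a) (γ b) q.2) ≤ C := by rwa [← hqt]
    have := seg_convex hη0' hCnn (γ a) (γ b) (γ t) hp2.2 hq2.1 hpC' hqC'
    exact absurd this (not_le.mpr (hfar t ht))
  -- conclusion
  intro z hz
  obtain ⟨s', hs', hz'⟩ := hz
  have hz'' : z = segp (γ a) (γ b) s' := hz'
  obtain ⟨t, ht, hle⟩ := main s' hs'
  refine csInf_le_of_le ?_ (⟨t, ht, rfl⟩ :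
      dK η z (γ t) ∈ {r : ℝ | ∃ t ∈ Set.Icc a b, r = dK η z (γ t)}) ?_
  · refine ⟨0, ?_⟩
    rintro r ⟨t', ht', rfl⟩
    exact dK_nonneg hη0' _ _
  · rw [hz'', dK_symm]
    exact hle
end

section
/- Let η > 0 and consider the Heisenberg group with Koranyi metric d for this η. Let p₁ = (0,0,0), p₂ = (x,y,z), p₄ = (1,0,t). If t² ≤ z²/2 and η < 1, then (d(p₁,p₂) + d(p₂,p₄))⁴ − d(p₁,p₄)⁴ ≥ (1/4)·η²·z². -/
set_option maxHeartbeats 1000000 in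
theorem stmt_18 (η : ℝ) (hη : 0 < η) (hη1 : η < 1) (x y z t : ℝ)
    (ht : t ^ 2 ≤ z ^ 2 / 2) :
    (1 / 4) * η ^ 2 * z ^ 2 ≤
      (dK η (0, 0, 0) (x, y, z) + dK η (x, y, z) (1, 0, t)) ^ 4 -
        dK η (0, 0, 0) (1, 0, t) ^ 4 := by
  have h4 : ∀ w : ℝ, 0 ≤ w → (w ^ ((1:ℝ)/4)) ^ (4:ℕ) = w := by
    intro w hw
    rw [← Real.rpow_natCast (w ^ ((1:ℝ)/4)) 4, ← Real.rpow_mul hw]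
    norm_num
  have hA : dK η (0,0,0) (x,y,z) = ((x^2+y^2)^2 + η*z^2) ^ ((1:ℝ)/4) := by
    simp [dK, Hmul, Hinv, KN]
  have hB : dK η (x,y,z) (1,0,t) =
      (((1-x)^2+(-y)^2)^2 + η*(t - z + y/2)^2) ^ ((1:ℝ)/4) := by
    simp only [dK, Hmul, Hinv, KN]
    norm_num
    ring_nf
  have hC : dK η (0,0,0) (1,0,t) = (1 + η*t^2) ^ ((1:ℝ)/4) := by
    simp [dK, Hmul, Hinv, KN]
  set a := dK η (0,0,0) (x,y,z) with ha
  set b := dK η (x,y,z) (1,0,t) with hb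
  set c := dK η (0,0,0) (1,0,t) with hc
  have hw1 : (0:ℝ) ≤ (x^2+y^2)^2 + η*z^2 := by positivity
  have hw2 : (0:ℝ) ≤ ((1-x)^2+(-y)^2)^2 + η*(t - z + y/2)^2 := by positivity
  have hw3 : (0:ℝ) ≤ 1 + η*t^2 := by positivity
  have ha0 : 0 ≤ a := by rw [hA]; positivity
  have hb0 : 0 ≤ b := by rw [hB]; positivity
  have hA4 : a ^ 4 = (x^2+y^2)^2 + η*z^2 := by rw [hA]; exact h4 _ hw1
  have hB4 : b ^ 4 = ((1-x)^2+(-y)^2)^2 + η*(t - z + y/2)^2 := by rw [hB]; exact h4 _ hw2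
  have hC4 : c ^ 4 = 1 + η*t^2 := by rw [hC]; exact h4 _ hw3
  have hx4 : |x| ^ 4 = (x^2)^2 := by
    rw [show (4:ℕ)=2*2 from rfl, pow_mul, sq_abs]
  have hv4 : |1-x| ^ 4 = ((1-x)^2)^2 := by
    rw [show (4:ℕ)=2*2 from rfl, pow_mul, sq_abs]
  have hax : |x| ≤ a := by
    refine le_of_pow_le_pow_left₀ (n := 4) (by norm_num) ha0 ?_
    rw [hA4, hx4]
    have h1 : (x^2)^2 ≤ (x^2+y^2)^2 :=
      pow_le_pow_left₀ (sq_nonneg x) (le_add_of_nonneg_right (sq_nonneg y)) 2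
    have h2 : 0 ≤ η*z^2 := by positivity
    linarith
  have hbx : |1 - x| ≤ b := by
    refine le_of_pow_le_pow_left₀ (n := 4) (by norm_num) hb0 ?_
    rw [hB4, hv4]
    have h1 : ((1-x)^2)^2 ≤ ((1-x)^2+(-y)^2)^2 :=
      pow_le_pow_left₀ (sq_nonneg _) (le_add_of_nonneg_right (sq_nonneg _)) 2
    have h2 : 0 ≤ η*(t - z + y/2)^2 := by positivity
    linarith
  have hsum : 1 ≤ |x| + |1 - x| := by
    calc (1:ℝ) = |x + (1-x)| := by norm_num
    _ ≤ |x| + |1-x| := abs_add_le _ _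
  have hux : (0:ℝ) ≤ |x| := abs_nonneg x
  have hvx : (0:ℝ) ≤ |1-x| := abs_nonneg _
  have m1 : |x|^3 * |1-x| ≤ a^3 * b :=
    mul_le_mul (pow_le_pow_left₀ hux hax 3) hbx hvx (pow_nonneg ha0 3)
  have m2 : |x|^2 * |1-x|^2 ≤ a^2 * b^2 :=
    mul_le_mul (pow_le_pow_left₀ hux hax 2) (pow_le_pow_left₀ hvx hbx 2)
      (pow_nonneg hvx 2) (pow_nonneg ha0 2)
  have m3 : |x| * |1-x|^3 ≤ a * b^3 :=
    mul_le_mul hax (pow_le_pow_left₀ hvx hbx 3) (pow_nonneg hvx 3) ha0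
  have m4 : |1-x|^4 ≤ b^4 := pow_le_pow_left₀ hvx hbx 4
  have ha4' : |x|^4 + η*z^2 ≤ a^4 := by
    rw [hA4, hx4]
    have h1 : (x^2)^2 ≤ (x^2+y^2)^2 :=
      pow_le_pow_left₀ (sq_nonneg x) (le_add_of_nonneg_right (sq_nonneg y)) 2
    linarith
  have hsum4 : (1:ℝ) ≤ (|x| + |1-x|)^4 := by
    calc (1:ℝ) = 1^4 := by norm_num
    _ ≤ (|x| + |1-x|)^4 := pow_le_pow_left₀ (by norm_num) hsum 4
  have key : 1 + η*z^2 ≤ (a+b)^4 := by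
    have e1 : (a+b)^4 = a^4 + 4*(a^3*b) + 6*(a^2*b^2) + 4*(a*b^3) + b^4 := by ring
    have e2 : (|x|+|1-x|)^4 = |x|^4 + 4*(|x|^3*|1-x|) + 6*(|x|^2*|1-x|^2)
        + 4*(|x| * |1-x|^3) + |1-x|^4 := by ring
    linarith
  have hz : η*t^2 + (1/4)*η^2*z^2 ≤ η*z^2 := by
    have h1 : η*t^2 ≤ η*(z^2/2) := mul_le_mul_of_nonneg_left ht hη.le
    have h2 : η^2*z^2 ≤ η*z^2 := by
      have : η^2 ≤ η := by
        calc η^2 = η*η := sq η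
        _ ≤ η*1 := mul_le_mul_of_nonneg_left hη1.le hη.le
        _ = η := mul_one η
      exact mul_le_mul_of_nonneg_right this (sq_nonneg z)
    have h3 : 0 ≤ η * z^2 := by positivity
    linarith
  rw [hC4]
  linarith
end
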